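/- Let r, s be real with 0 < s, 2s < r, and r + 5s/3 < 1, and suppose (3 + 8s)/9 ≤ r ≤ 2(3 − s)/9. Then the point p = ((3 − s)/9, 2(3 − s)/9) lies in the closed region D6 = {(x₁, x₂) : s ≤ x₁ ≤ r − s, r ≤ x₂ ≤ 1 − 4s/3} and is a fixed point of the affine map F₆, i.e. F₆(p) = p. -/

import Mathlib

/-- The affine branch of the return-time map on region 6. -/
noncomputable def F6 (s : ℝ) (p : ℝ × ℝ) : ℝ × ℝ :=
  (1 - p.2 - s/3, 1 - p.2 + p.1 - s/3)

/-- The closed region D6. -/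
def D6 (r s : ℝ) : Set (ℝ × ℝ) :=
  {p | s ≤ p.1 ∧ p.1 ≤ r - s ∧ r ≤ p.2 ∧ p.2 ≤ 1 - 4*s/3}

noncomputable def F6FixedPt (s : ℝ) : ℝ × ℝ :=
  ((3 - s)/9, 2*(3 - s)/9)

theorem isFixedPt_F6_iff {s : ℝ} {p : ℝ × ℝ} :
    Function.IsFixedPt (F6 s) p ↔ p = F6FixedPt s := by
  obtain ⟨x, y⟩ := p
  simp only [Function.IsFixedPt, F6, F6FixedPt, Prod.mk.injEq]
  constructor
  · rintro ⟨hx, hy⟩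
    constructor <;> linarith
  · rintro ⟨rfl, rfl⟩
    constructor <;> ring

theorem F6FixedPt_mem_D6_iff {r s : ℝ} :
    F6FixedPt s ∈ D6 r s ↔ (3 + 8*s)/9 ≤ r ∧ r ≤ 2*(3 - s)/9 := by
  simp only [F6FixedPt, D6, Set.mem_ofPred_eq]
  constructor
  · rintro ⟨-, hr, hr', -⟩
    constructor <;> linarith
  · rintro ⟨hlo, hhi⟩
    -- the outer bounds of `D6` both amount to `10 * s ≤ 3`, which the window for `r` forces
    refine ⟨?_, ?_, hhi, ?_⟩ <;> linarith

theorem fixed_point_in_region6_general (r s : ℝ) (hlo : (3 + 8*s)/9 ≤ r) (hhi : r ≤ 2*(3 - s)/9) :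
    ((3 - s)/9, 2*(3 - s)/9) ∈ D6 r s ∧
    F6 s ((3 - s)/9, 2*(3 - s)/9) = ((3 - s)/9, 2*(3 - s)/9) :=
  ⟨F6FixedPt_mem_D6_iff.mpr ⟨hlo, hhi⟩, isFixedPt_F6_iff.mpr rfl⟩

theorem fixed_point_in_region6 (r s : ℝ) (hs : 0 < s) (hrs : 2*s < r)
    (h1 : r + 5*s/3 < 1) (hlo : (3 + 8*s)/9 ≤ r) (hhi : r ≤ 2*(3 - s)/9) :
    ((3 - s)/9, 2*(3 - s)/9) ∈ D6 r s ∧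
    F6 s ((3 - s)/9, 2*(3 - s)/9) = ((3 - s)/9, 2*(3 - s)/9) :=
  fixed_point_in_region6_general r s hlo hhi
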